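/- arXiv:2310.06442 — 2 statements merged into one kernel-verified Lean document; each statement's English description precedes it below -/
import Mathlib

section
/- Let H be a real Hilbert space, p > 2, and N a seminorm on H with B = sup{N(u)/‖u‖ : u ≠ 0} ∈ (0,∞). Define I(u) = ½‖u‖² − (1/p)N(u)^p and the potential-well depth d = inf over u with N(u) ≠ 0 of sup_{λ>0} I(λu). Then d = (½ − 1/p) B^{−2p/(p−2)}; equivalently, setting λ₁ = B^{−p/(p−2)} and λ₂ = B^{−2/(p−2)}, one has d = (½ − 1/p)λ₁² = (½ − 1/p)λ₂^p. -/
open Set Filter Topology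

private lemma conj_aux {p : ℝ} (hp : 2 < p) : (p/2).HolderConjugate (p/(p-2)) := by
  have hp0 : (0:ℝ) < p := by linarith
  constructor
  · rw [inv_div, inv_div, ← add_div, inv_one, div_eq_one_iff_eq hp0.ne']
    ring
  · positivity
  · apply div_pos <;> linarith

private lemma pointwise_le {p : ℝ} (hp : 2 < p) {l a b : ℝ} (hl : 0 < l) (ha : 0 < a)
    (hb : 0 < b) :
    1/2 * (l*a)^2 - 1/p * (l*b)^p ≤ (1/2 - 1/p) * (a/b) ^ (2*p/(p-2)) := by
  have hp0 : (0:ℝ) < p := by linarith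
  have hp2 : (0:ℝ) < p - 2 := by linarith
  have key := Real.young_inequality_of_nonneg (a := (l*b)^(2:ℝ)) (b := (a/b)^(2:ℝ))
    (by positivity) (by positivity) (conj_aux hp)
  have e1 : (l*b)^(2:ℝ) * (a/b)^(2:ℝ) = (l*a)^(2:ℝ) := by
    rw [← Real.mul_rpow (by positivity) (by positivity)]
    congr 1
    field_simp
  have e2 : ((l*b)^(2:ℝ))^(p/2) = (l*b)^p := by
    rw [← Real.rpow_mul (by positivity)]
    have : 2 * (p/2) = p := by field_simp
    rw [this]
  have e3 : ((a/b)^(2:ℝ))^(p/(p-2)) = (a/b)^(2*p/(p-2)) := by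
    rw [← Real.rpow_mul (by positivity)]
    have : 2 * (p/(p-2)) = 2*p/(p-2) := by ring
    rw [this]
  rw [e1, e2, e3] at key
  have e4 : (l*a)^(2:ℝ) = (l*a)^(2:ℕ) := by
    rw [← Real.rpow_natCast (l*a) 2]
    norm_num
  rw [e4] at key
  set A := (l*a)^(2:ℕ) with hA
  set Y := (l*b)^p with hY
  set X := (a/b)^(2*p/(p-2)) with hX
  rw [← mul_le_mul_iff_of_pos_left hp0]
  have key' : p * A ≤ 2*Y + (p-2)*X := by
    have := (mul_le_mul_iff_of_pos_left hp0).mpr key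
    calc p * A ≤ p * (Y / (p/2) + X / (p/(p-2))) := this
      _ = 2*Y + (p-2)*X := by field_simp
  have h1 : p * (1/2 * A - 1/p * Y) = p/2 * A - Y := by field_simp
  have h2 : p * ((1/2 - 1/p) * X) = (p/2 - 1) * X := by field_simp
  rw [h1, h2]
  linarith

private lemma attain {p : ℝ} (hp : 2 < p) {a b : ℝ} (ha : 0 < a) (hb : 0 < b) :
    ∃ l : ℝ, 0 < l ∧
      1/2 * (l*a)^2 - 1/p * (l*b)^p = (1/2 - 1/p) * (a/b) ^ (2*p/(p-2)) := by
  have hp0 : (0:ℝ) < p := by linarith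
  have hp2 : (0:ℝ) < p - 2 := by linarith
  set t := a / b with htdef
  have ht : 0 < t := div_pos ha hb
  refine ⟨t ^ (2/(p-2)) / b, by positivity, ?_⟩
  have hla : t ^ (2/(p-2)) / b * a = t ^ (p/(p-2)) := by
    have : t ^ (2/(p-2)) / b * a = t ^ (2/(p-2)) * t := by
      rw [htdef]; field_simp
    rw [this]
    nth_rewrite 2 [← Real.rpow_one t]
    rw [← Real.rpow_add ht]
    have : 2/(p-2) + 1 = p/(p-2) := by field_simp; ring
    rw [this]
  have hlb : t ^ (2/(p-2)) / b * b = t ^ (2/(p-2)) := by field_simp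
  rw [hla, hlb]
  have h1 : (t ^ (p/(p-2)))^(2:ℕ) = t ^ (2*p/(p-2)) := by
    rw [← Real.rpow_natCast (t ^ (p/(p-2))) 2, ← Real.rpow_mul ht.le]
    norm_num
    have : p/(p-2) * 2 = 2*p/(p-2) := by ring
    rw [this]
  have h2 : (t ^ (2/(p-2)))^p = t ^ (2*p/(p-2)) := by
    rw [← Real.rpow_mul ht.le]
    have : 2/(p-2) * p = 2*p/(p-2) := by ring
    rw [this]
  rw [h1, h2]
  ring

/-- The potential-well depth formula: `d = (1/2 - 1/p) B^{-2p/(p-2)}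
  = (1/2 - 1/p) λ₁² = (1/2 - 1/p) λ₂^p`. -/
theorem potential_well_depth {H : Type*} [NormedAddCommGroup H] [InnerProductSpace ℝ H]
    (N : Seminorm ℝ H) (p B : ℝ) (hp : 2 < p) (hB : 0 < B)
    (hNB : ∀ u : H, N u ≤ B * ‖u‖)
    (hBopt : ∀ C : ℝ, (∀ u : H, N u ≤ C * ‖u‖) → B ≤ C)
    (I : H → ℝ) (hIdef : ∀ u, I u = 1/2 * ‖u‖^2 - 1/p * (N u) ^ p) :
    sInf {m : ℝ | ∃ u : H, N u ≠ 0 ∧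
        m = sSup ((fun l : ℝ => I (l • u)) '' Set.Ioi 0)}
      = (1/2 - 1/p) * B ^ (-(2*p/(p-2))) ∧
    (1/2 - 1/p) * B ^ (-(2*p/(p-2))) = (1/2 - 1/p) * (B ^ (-(p/(p-2))))^2 ∧
    (1/2 - 1/p) * B ^ (-(2*p/(p-2))) = (1/2 - 1/p) * (B ^ (-(2/(p-2)))) ^ p := by
  have hp0 : (0:ℝ) < p := by linarith
  have hp2 : (0:ℝ) < p - 2 := by linarith
  have hc : (0:ℝ) < 1/2 - 1/p := by
    have : 1/p < 1/2 := by
      apply one_div_lt_one_div_of_lt <;> linarith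
    linarith
  have hr : (0:ℝ) < 2*p/(p-2) := by positivity
  -- positivity facts for u with N u ≠ 0
  have hpos : ∀ u : H, N u ≠ 0 → 0 < ‖u‖ ∧ 0 < N u := by
    intro u hNu
    have hb : 0 < N u := (apply_nonneg N u).lt_of_ne (Ne.symm hNu)
    refine ⟨?_, hb⟩
    rcases eq_or_ne u 0 with rfl | hu
    · simp at hNu
    · exact norm_pos_iff.mpr hu
  -- per-u supremum computation
  have hsup : ∀ u : H, N u ≠ 0 →
      sSup ((fun l : ℝ => I (l • u)) '' Set.Ioi 0)
        = (1/2 - 1/p) * (‖u‖ / N u) ^ (2*p/(p-2)) := by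
    intro u hNu
    obtain ⟨ha, hb⟩ := hpos u hNu
    have hfun : ∀ l : ℝ, 0 < l →
        I (l • u) = 1/2 * (l*‖u‖)^2 - 1/p * (l * N u)^p := by
      intro l hl
      rw [hIdef]
      have h1 : ‖l • u‖ = l * ‖u‖ := by
        rw [norm_smul, Real.norm_eq_abs, abs_of_pos hl]
      have h2 : N (l • u) = l * N u := by
        rw [map_smul_eq_mul, Real.norm_eq_abs, abs_of_pos hl]
      rw [h1, h2]
    have hne : ((fun l : ℝ => I (l • u)) '' Set.Ioi 0).Nonempty :=
      ⟨I ((1:ℝ) • u), ⟨1, by norm_num, rfl⟩⟩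
    have hub : ∀ x ∈ (fun l : ℝ => I (l • u)) '' Set.Ioi 0,
        x ≤ (1/2 - 1/p) * (‖u‖ / N u) ^ (2*p/(p-2)) := by
      rintro x ⟨l, hl, rfl⟩
      rw [Set.mem_Ioi] at hl
      show I (l • u) ≤ _
      rw [hfun l hl]
      exact pointwise_le hp hl ha hb
    apply le_antisymm
    · exact csSup_le hne hub
    · obtain ⟨l, hl, hval⟩ := attain hp ha hb
      have hmem : I (l • u) ∈ (fun l : ℝ => I (l • u)) '' Set.Ioi 0 := ⟨l, hl, rfl⟩
      have := le_csSup ⟨_, hub⟩ hmem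
      rw [hfun l hl, hval] at this
      exact this
  -- lower bound for each member
  have hlow : ∀ u : H, N u ≠ 0 →
      (1/2 - 1/p) * B ^ (-(2*p/(p-2))) ≤ (1/2 - 1/p) * (‖u‖ / N u) ^ (2*p/(p-2)) := by
    intro u hNu
    obtain ⟨ha, hb⟩ := hpos u hNu
    have h1 : B⁻¹ ≤ ‖u‖ / N u := by
      rw [le_div_iff₀ hb]
      have := mul_le_mul_of_nonneg_left (hNB u) (inv_nonneg.mpr hB.le)
      rwa [← mul_assoc, inv_mul_cancel₀ hB.ne', one_mul] at this
    have h2 : B ^ (-(2*p/(p-2))) ≤ (‖u‖ / N u) ^ (2*p/(p-2)) := by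
      rw [Real.rpow_neg hB.le, ← Real.inv_rpow hB.le]
      exact Real.rpow_le_rpow (inv_nonneg.mpr hB.le) h1 hr.le
    exact mul_le_mul_of_nonneg_left h2 hc.le
  -- set nonempty
  have hex : ∃ u : H, N u ≠ 0 := by
    by_contra h
    push_neg at h
    have := hBopt 0 (fun u => by rw [h u, zero_mul])
    linarith
  obtain ⟨u0, hu0⟩ := hex
  set S := {m : ℝ | ∃ u : H, N u ≠ 0 ∧
      m = sSup ((fun l : ℝ => I (l • u)) '' Set.Ioi 0)} with hS
  have hSne : S.Nonempty := ⟨_, u0, hu0, rfl⟩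
  have hSbdd : BddBelow S := by
    refine ⟨(1/2 - 1/p) * B ^ (-(2*p/(p-2))), ?_⟩
    rintro m ⟨u, hNu, rfl⟩
    rw [hsup u hNu]
    exact hlow u hNu
  refine ⟨?_, ?_, ?_⟩
  · apply le_antisymm
    · apply le_of_forall_pos_le_add
      intro ε hε
      have hcont : ContinuousAt (fun C : ℝ => (1/2 - 1/p) * C ^ (-(2*p/(p-2)))) B :=
        ContinuousAt.mul continuousAt_const
          (Real.continuousAt_rpow_const B _ (Or.inl hB.ne'))
      have hev : ∀ᶠ C in 𝓝[<] B,
          (1/2 - 1/p) * C ^ (-(2*p/(p-2))) < (1/2 - 1/p) * B ^ (-(2*p/(p-2))) + ε := by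
        apply Filter.Eventually.filter_mono nhdsWithin_le_nhds
        have : (fun C : ℝ => (1/2 - 1/p) * C ^ (-(2*p/(p-2)))) ⁻¹'
            (Set.Iio ((1/2 - 1/p) * B ^ (-(2*p/(p-2))) + ε)) ∈ 𝓝 B :=
          hcont (Iio_mem_nhds (by linarith))
        filter_upwards [this] with C hC using hC
      have hev2 : ∀ᶠ C in 𝓝[<] B, 0 < C :=
        Filter.Eventually.filter_mono nhdsWithin_le_nhds (eventually_gt_nhds hB)
      have hev3 : ∀ᶠ C in 𝓝[<] B, C < B := eventually_mem_nhdsWithin.mono (fun C hC => hC)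
      obtain ⟨C, hfC, hC0, hCB⟩ := (hev.and (hev2.and hev3)).exists
      have hCex : ∃ u : H, C * ‖u‖ < N u := by
        by_contra h
        push_neg at h
        exact absurd (hBopt C h) (not_le.mpr hCB)
      obtain ⟨u, hu⟩ := hCex
      have hNu : N u ≠ 0 :=
        ne_of_gt (lt_of_le_of_lt (by positivity) hu)
      obtain ⟨ha, hb⟩ := hpos u hNu
      have h1 : ‖u‖ / N u ≤ C⁻¹ := by
        rw [div_le_iff₀ hb]
        have := mul_le_mul_of_nonneg_left hu.le (inv_nonneg.mpr hC0.le)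
        rwa [← mul_assoc, inv_mul_cancel₀ hC0.ne', one_mul] at this
      have h2 : (‖u‖ / N u) ^ (2*p/(p-2)) ≤ C ^ (-(2*p/(p-2))) := by
        rw [Real.rpow_neg hC0.le, ← Real.inv_rpow hC0.le]
        exact Real.rpow_le_rpow (by positivity) h1 hr.le
      have hle : sInf S ≤ (1/2 - 1/p) * (‖u‖ / N u) ^ (2*p/(p-2)) :=
        csInf_le hSbdd ⟨u, hNu, (hsup u hNu).symm⟩
      calc sInf S ≤ (1/2 - 1/p) * (‖u‖ / N u) ^ (2*p/(p-2)) := hle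
        _ ≤ (1/2 - 1/p) * C ^ (-(2*p/(p-2))) := mul_le_mul_of_nonneg_left h2 hc.le
        _ ≤ (1/2 - 1/p) * B ^ (-(2*p/(p-2))) + ε := hfC.le
    · apply le_csInf hSne
      rintro m ⟨u, hNu, rfl⟩
      rw [hsup u hNu]
      exact hlow u hNu
  · have e : (B ^ (-(p/(p-2))))^(2:ℕ) = B ^ (-(p/(p-2)) * 2) := by
      rw [← Real.rpow_natCast (B ^ (-(p/(p-2)))) 2, ← Real.rpow_mul hB.le]
      norm_num
    have h3 : -(2*p/(p-2)) = -(p/(p-2)) * 2 := by ring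
    rw [e, h3]
  · have e : (B ^ (-(2/(p-2))))^p = B ^ (-(2/(p-2)) * p) := by
      rw [← Real.rpow_mul hB.le]
    have h3 : -(2*p/(p-2)) = -(2/(p-2)) * p := by ring
    rw [e, h3]
end

section
/- Let H be a real Hilbert space, p > 2, N a seminorm on H with finite positive best constant B = sup_{u≠0} N(u)/‖u‖. Set I(u) = ½‖u‖² − (1/p)N(u)^p, K(u) = ‖u‖² − N(u)^p, d = (½−1/p)B^{−2p/(p−2)}, λ₁ = B^{−p/(p−2)}, λ₂ = B^{−2/(p−2)}. Then for every u ∈ H with N(u) ≠ 0 and I(u) ≤ d, the following equivalences hold: K(u) ≥ 0 ⟺ ‖u‖ ≤ λ₁ ⟺ N(u) ≤ λ₂, and K(u) ≤ 0 ⟺ ‖u‖ ≥ λ₁ ⟺ N(u) ≥ λ₂. -/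
open Set Filter Topology

set_option maxHeartbeats 1000000

private lemma pw_aux (p B x y l1 l2 : ℝ) (hp : 2 < p) (hB : 0 < B)
    (hx : 0 < x) (hy : 0 < y) (hyx : y ≤ B * x)
    (hl1 : 0 < l1) (hl2 : 0 < l2)
    (h12 : B * l1 = l2) (h2p : l2 ^ p = l1 ^ 2)
    (hBp : B ^ p * l1 ^ (p - 2) = 1)
    (hI : 1/2 * x ^ 2 - 1/p * y ^ p ≤ (1/2 - 1/p) * l1 ^ 2) :
    ((0 ≤ x ^ 2 - y ^ p ↔ x ≤ l1) ∧ (0 ≤ x ^ 2 - y ^ p ↔ y ≤ l2)) ∧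
    ((x ^ 2 - y ^ p ≤ 0 ↔ l1 ≤ x) ∧ (x ^ 2 - y ^ p ≤ 0 ↔ l2 ≤ y)) := by
  have hp0 : (0:ℝ) < p := by linarith
  have hp2 : (0:ℝ) < p - 2 := by linarith
  have hY : 0 < y ^ p := Real.rpow_pos_of_pos hy p
  have hBpos : 0 < B ^ p := Real.rpow_pos_of_pos hB p
  have hxp : x ^ p = x ^ (p-2) * x ^ 2 := by
    rw [← Real.rpow_natCast x 2, ← Real.rpow_add hx]
    norm_num
  have key : y ^ p ≤ B ^ p * (x ^ (p-2) * x ^ 2) := by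
    calc y ^ p ≤ (B*x) ^ p := Real.rpow_le_rpow hy.le hyx hp0.le
    _ = B ^ p * x ^ p := Real.mul_rpow hB.le hx.le
    _ = _ := by rw [hxp]
  have hmul : ∀ t : ℝ, B ^ p * (l1 ^ (p-2) * t) = t := by
    intro t; rw [← mul_assoc, hBp, one_mul]
  have hA : x ≤ l1 → y ^ p ≤ x ^ 2 := by
    intro h
    have h1 : x ^ (p-2) ≤ l1 ^ (p-2) := Real.rpow_le_rpow hx.le h hp2.le
    have h2 : B ^ p * (x ^ (p-2) * x ^ 2) ≤ B ^ p * (l1 ^ (p-2) * x ^ 2) := by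
      gcongr
    calc y ^ p ≤ B ^ p * (x ^ (p-2) * x ^ 2) := key
    _ ≤ B ^ p * (l1 ^ (p-2) * x ^ 2) := h2
    _ = x ^ 2 := hmul _
  have hA' : x < l1 → y ^ p < x ^ 2 := by
    intro h
    have h1 : x ^ (p-2) < l1 ^ (p-2) := Real.rpow_lt_rpow hx.le h hp2
    have hx2 : (0:ℝ) < x ^ 2 := by positivity
    have h2 : B ^ p * (x ^ (p-2) * x ^ 2) < B ^ p * (l1 ^ (p-2) * x ^ 2) := by
      have := mul_lt_mul_of_pos_right h1 hx2
      nlinarith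
    calc y ^ p ≤ B ^ p * (x ^ (p-2) * x ^ 2) := key
    _ < B ^ p * (l1 ^ (p-2) * x ^ 2) := h2
    _ = x ^ 2 := hmul _
  have hc2 : (0:ℝ) < 1/2 - 1/p := by
    rw [sub_pos, div_lt_div_iff₀ hp0 (by norm_num)]; linarith
  have hB' : l1 ≤ x → x ^ 2 - y ^ p ≤ 0 := by
    intro h
    by_contra hc
    push_neg at hc
    have hxx : l1 ^ 2 ≤ x ^ 2 := by nlinarith
    have h4 : 0 < 1/p * (x ^ 2 - y ^ p) := by positivity
    nlinarith
  have hBs : l1 < x → x ^ 2 - y ^ p < 0 := by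
    intro h
    by_contra hc
    push_neg at hc
    have hxx : l1 ^ 2 < x ^ 2 := by nlinarith
    have h4 : 0 ≤ 1/p * (x ^ 2 - y ^ p) := by positivity
    nlinarith
  have d1 : 0 ≤ x ^ 2 - y ^ p → x ≤ l1 := by
    intro h
    by_contra hc
    push_neg at hc
    exact absurd h (not_le.mpr (hBs hc))
  have d2 : x ≤ l1 → 0 ≤ x ^ 2 - y ^ p := fun h => by linarith [hA h]
  have d3 : 0 ≤ x ^ 2 - y ^ p → y ≤ l2 := by
    intro h
    have := d1 h
    calc y ≤ B * x := hyx
    _ ≤ B * l1 := by nlinarith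
    _ = l2 := h12
  have d4 : y ≤ l2 → 0 ≤ x ^ 2 - y ^ p := by
    intro h
    have h1 : y ^ p ≤ l2 ^ p := Real.rpow_le_rpow hy.le h hp0.le
    rw [h2p] at h1
    by_contra hc
    push_neg at hc
    have hxl : x < l1 := by nlinarith
    linarith [hA' hxl]
  have d5 : x ^ 2 - y ^ p ≤ 0 → l1 ≤ x := by
    intro h
    by_contra hc
    push_neg at hc
    linarith [hA' hc]
  have d6 : l1 ≤ x → x ^ 2 - y ^ p ≤ 0 := hB'
  have d7 : x ^ 2 - y ^ p ≤ 0 → l2 ≤ y := by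
    intro h
    have hx1 := d5 h
    by_contra hc
    push_neg at hc
    have h1 : y ^ p < l2 ^ p := Real.rpow_lt_rpow hy.le hc hp0
    rw [h2p] at h1
    nlinarith
  have d8 : l2 ≤ y → x ^ 2 - y ^ p ≤ 0 := by
    intro h
    have h1 : l2 ^ p ≤ y ^ p := Real.rpow_le_rpow hl2.le h hp0.le
    rw [h2p] at h1
    by_contra hc
    push_neg at hc
    have hxl : l1 < x := by nlinarith
    linarith [hBs hxl]
  exact ⟨⟨⟨d1, d2⟩, ⟨d3, d4⟩⟩, ⟨⟨d5, d6⟩, ⟨d7, d8⟩⟩⟩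

/-- Lemma 9: potential-well dichotomy. For `u` with `N u ≠ 0` and `I(u) ≤ d`:
`K(u) ≥ 0 ⟺ ‖u‖ ≤ λ₁ ⟺ N(u) ≤ λ₂` and `K(u) ≤ 0 ⟺ ‖u‖ ≥ λ₁ ⟺ N(u) ≥ λ₂`. -/
theorem potential_well_dichotomy {H : Type*} [NormedAddCommGroup H] [InnerProductSpace ℝ H]
    (N : Seminorm ℝ H) (p B : ℝ) (hp : 2 < p) (hB : 0 < B)
    (hNB : ∀ u : H, N u ≤ B * ‖u‖)
    (hBopt : ∀ C : ℝ, (∀ u : H, N u ≤ C * ‖u‖) → B ≤ C)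
    (u : H) (hu : N u ≠ 0)
    (hIu : 1/2 * ‖u‖^2 - 1/p * (N u) ^ p ≤ (1/2 - 1/p) * B ^ (-(2*p/(p-2)))) :
    ((0 ≤ ‖u‖^2 - (N u) ^ p ↔ ‖u‖ ≤ B ^ (-(p/(p-2)))) ∧
     (0 ≤ ‖u‖^2 - (N u) ^ p ↔ N u ≤ B ^ (-(2/(p-2))))) ∧
    ((‖u‖^2 - (N u) ^ p ≤ 0 ↔ B ^ (-(p/(p-2))) ≤ ‖u‖) ∧
     (‖u‖^2 - (N u) ^ p ≤ 0 ↔ B ^ (-(2/(p-2))) ≤ N u)) := by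
  have hp2 : p - 2 ≠ 0 := ne_of_gt (by linarith)
  have hy : 0 < N u := lt_of_le_of_ne (apply_nonneg N u) (Ne.symm hu)
  have hyx : N u ≤ B * ‖u‖ := hNB u
  have hx : 0 < ‖u‖ := by
    rcases (norm_nonneg u).lt_or_eq with h | h
    · exact h
    · exfalso; rw [← h] at hyx; simp at hyx; linarith
  set l1 : ℝ := B ^ (-(p/(p-2))) with hl1def
  set l2 : ℝ := B ^ (-(2/(p-2))) with hl2def
  have hl1 : 0 < l1 := Real.rpow_pos_of_pos hB _
  have hl2 : 0 < l2 := Real.rpow_pos_of_pos hB _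
  have h12 : B * l1 = l2 := by
    rw [hl1def, hl2def]
    nth_rewrite 1 [← Real.rpow_one B]
    rw [← Real.rpow_add hB]
    congr 1
    field_simp
    ring
  have hd : B ^ (-(2*p/(p-2))) = l1 ^ 2 := by
    rw [hl1def, ← Real.rpow_natCast (B ^ (-(p/(p-2)))) 2, ← Real.rpow_mul hB.le]
    congr 1
    push_cast
    ring
  have h2p : l2 ^ p = l1 ^ 2 := by
    rw [hl2def, ← Real.rpow_mul hB.le, ← hd]
    congr 1
    ring
  have hBp : B ^ p * l1 ^ (p - 2) = 1 := by
    rw [hl1def, ← Real.rpow_mul hB.le, ← Real.rpow_add hB]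
    rw [show p + -(p/(p-2)) * (p-2) = 0 by field_simp; ring]
    exact Real.rpow_zero B
  rw [hd] at hIu
  exact pw_aux p B ‖u‖ (N u) l1 l2 hp hB hx hy hyx hl1 hl2 h12 h2p hBp hIu
end
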